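/- Let c : ℝ → ℝ^d be a 2π-periodic immersion of class C² and let h : ℝ → ℝ be a 2π-periodic twice continuously differentiable function. Then ‖D_c h‖²_{L^∞} ≤ (ℓ_c/4)·‖D_c² h‖²_{L²(ds)}, where D_c² h = D_c(D_c h). -/

import Mathlib

/-!
The function `f = D_c h` is periodic and vanishes somewhere, since by Rolle `h'` does. Along the
period `[θ₀, θ₀ + 2π]` starting at a zero `θ₀`, `|f θ|` is bounded both by `∫_{θ₀}^{θ} |f'|` and by
`∫_{θ}^{θ₀+2π} |f'|`, hence `2 ‖f‖_∞ ≤ ∫ |f'|` over a period. Cauchy–Schwarz with weight `|c'|`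
then gives `(∫ |f'|)² ≤ ℓ_c · ∫ f'² / |c'| = ℓ_c · ‖D_c f‖²_{L²(ds)}`.
-/

open scoped Real
open MeasureTheory

/-- A 2π-periodic immersion of class C²: `c` is C², 2π-periodic and has
nonvanishing derivative. -/
def ClosedImmersionC2 {d : ℕ} (c : ℝ → EuclideanSpace ℝ (Fin d)) : Prop :=
  ContDiff ℝ 2 c ∧ Function.Periodic c (2 * π) ∧ ∀ θ : ℝ, deriv c θ ≠ 0

/-- The arc-length derivative `D_c h = h' / |c'|` of a scalar function. -/
noncomputable def arcDerivS {d : ℕ} (c : ℝ → EuclideanSpace ℝ (Fin d))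
    (h : ℝ → ℝ) : ℝ → ℝ :=
  fun θ => deriv h θ / ‖deriv c θ‖

open intervalIntegral

theorem sq_integral_abs_le_integral_sq_div_mul_integral {u w : ℝ → ℝ} {a b : ℝ} (hab : a ≤ b)
    (hu : Continuous u) (hw : Continuous w) (hw_pos : ∀ t, 0 < w t) :
    (∫ t in a..b, |u t|) ^ 2 ≤ (∫ t in a..b, u t ^ 2 / w t) * ∫ t in a..b, w t := by
  have hw_int : IntervalIntegrable w volume a b := hw.intervalIntegrable a b
  have hu_int : IntervalIntegrable (fun t => |u t|) volume a b := hu.abs.intervalIntegrable a b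
  have hq_int : IntervalIntegrable (fun t => u t ^ 2 / w t) volume a b :=
    ((hu.pow 2).div hw fun t => (hw_pos t).ne').intervalIntegrable a b
  have hquadratic : ∀ x : ℝ, 0 ≤ (∫ t in a..b, w t) * (x * x) + (2 * ∫ t in a..b, |u t|) * x +
      ∫ t in a..b, u t ^ 2 / w t := by
    intro x
    have hexpand : ∀ t, (x * w t + |u t|) ^ 2 / w t =
        x * x * w t + 2 * x * |u t| + u t ^ 2 / w t := by
      intro t
      rw [← sq_abs (u t)]
      field_simp [(hw_pos t).ne']
      ring
    calc 0 ≤ ∫ t in a..b, (x * w t + |u t|) ^ 2 / w t :=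
          integral_nonneg hab fun t _ => div_nonneg (sq_nonneg _) (hw_pos t).le
      _ = _ := by
        simp_rw [hexpand]
        rw [integral_add ((hw_int.const_mul _).add (hu_int.const_mul _)) hq_int,
          integral_add (hw_int.const_mul _) (hu_int.const_mul _),
          intervalIntegral.integral_const_mul, intervalIntegral.integral_const_mul]
        ring
  have hdiscrim := discrim_le_zero hquadratic
  rw [discrim] at hdiscrim
  linarith

theorem two_mul_abs_le_integral_abs_deriv {f : ℝ → ℝ} {a b θ : ℝ} (hf : Differentiable ℝ f)
    (hf' : Continuous (deriv f)) (ha : f a = 0) (hb : f b = 0) (hθ : θ ∈ Set.Icc a b) :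
    2 * |f θ| ≤ ∫ t in a..b, |deriv f t| := by
  have hFTC : ∀ s t, ∫ x in s..t, deriv f x = f t - f s := fun s t =>
    integral_deriv_eq_sub (fun x _ => hf x) (hf'.intervalIntegrable s t)
  have hleft : |f θ| ≤ ∫ t in a..θ, |deriv f t| := by
    simpa [hFTC, ha] using abs_integral_le_integral_abs (f := deriv f) (μ := volume) hθ.1
  have hright : |f θ| ≤ ∫ t in θ..b, |deriv f t| := by
    simpa [hFTC, hb] using abs_integral_le_integral_abs (f := deriv f) (μ := volume) hθ.2
  rw [← integral_add_adjacent_intervals (hf'.abs.intervalIntegrable a θ)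
    (hf'.abs.intervalIntegrable θ b)]
  linarith

namespace Function.Periodic

variable {F : Type*} [NormedAddCommGroup F] [NormedSpace ℝ F] {T : ℝ}

theorem deriv {f : ℝ → F} (hf : Periodic f T) : Periodic (_root_.deriv f) T := fun x => by
  rw [← deriv_comp_add_const]
  exact congrArg (_root_.deriv · x) (funext hf)

theorem two_mul_abs_le_integral_abs_deriv {f : ℝ → ℝ} (hf : Periodic f T) (hT : 0 < T)
    (hdiff : Differentiable ℝ f) (hf' : Continuous (_root_.deriv f)) {θ₀ : ℝ} (hθ₀ : f θ₀ = 0)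
    (θ : ℝ) : 2 * |f θ| ≤ ∫ t in (0 : ℝ)..T, |_root_.deriv f t| := by
  obtain ⟨θ', hθ', hfθ⟩ := hf.exists_mem_Ico hT θ θ₀
  have hper : Periodic (fun t => |_root_.deriv f t|) T := hf.deriv.comp abs
  rw [hfθ, ← zero_add T, ← hper.intervalIntegral_add_eq θ₀ 0]
  exact _root_.two_mul_abs_le_integral_abs_deriv hdiff hf' hθ₀ (by rw [hf θ₀, hθ₀])
    ⟨hθ'.1, hθ'.2.le⟩

theorem exists_deriv_eq_zero {f : ℝ → ℝ} (hf : Periodic f T) (hT : 0 < T) (hcont : Continuous f) :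
    ∃ θ, _root_.deriv f θ = 0 :=
  (_root_.exists_deriv_eq_zero hT hcont.continuousOn (by rw [← zero_add T, hf 0])).imp
    fun _ => And.right

end Function.Periodic

section ArcDeriv

variable {d : ℕ} {c : ℝ → EuclideanSpace ℝ (Fin d)} {h : ℝ → ℝ}

theorem ContDiff.arcDerivS (hc : ContDiff ℝ 2 c) (hc' : ∀ θ, deriv c θ ≠ 0)
    (hh : ContDiff ℝ 2 h) : ContDiff ℝ 1 (arcDerivS c h) :=
  (hh.deriv' (n := 1)).div ((hc.deriv' (n := 1)).norm ℝ hc') fun θ => norm_ne_zero_iff.mpr (hc' θ)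

theorem Function.Periodic.arcDerivS {T : ℝ} (hc : Function.Periodic c T)
    (hh : Function.Periodic h T) : Function.Periodic (arcDerivS c h) T := fun x => by
  simp only [_root_.arcDerivS, hc.deriv x, hh.deriv x]

theorem arcDerivS_sq_mul_norm (θ : ℝ) :
    arcDerivS c h θ ^ 2 * ‖deriv c θ‖ = deriv h θ ^ 2 / ‖deriv c θ‖ := by
  rcases eq_or_ne ‖deriv c θ‖ 0 with h0 | h0
  · simp [arcDerivS, h0]
  · simp only [arcDerivS]
    field_simp

end ArcDeriv

theorem stmt1_general (d : ℕ) (c : ℝ → EuclideanSpace ℝ (Fin d))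
    (hc : ClosedImmersionC2 c)
    (h : ℝ → ℝ) (hh : ContDiff ℝ 2 h) (hhper : Function.Periodic h (2 * π)) :
    (⨆ θ : ℝ, |arcDerivS c h θ|) ^ 2 ≤
      (∫ θ in (0:ℝ)..(2 * π), ‖deriv c θ‖) / 4 *
        (∫ θ in (0:ℝ)..(2 * π), (arcDerivS c (arcDerivS c h) θ) ^ 2 * ‖deriv c θ‖) := by
  obtain ⟨hc2, hcper, hc'⟩ := hc
  set f := arcDerivS c h
  have hf : ContDiff ℝ 1 f := hc2.arcDerivS hc' hh
  have hf' : Continuous (deriv f) := hf.continuous_deriv_one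
  obtain ⟨θ₀, hh'θ₀⟩ := hhper.exists_deriv_eq_zero Real.two_pi_pos hh.continuous
  have hθ₀ : f θ₀ = 0 := by simp [f, arcDerivS, hh'θ₀]
  set S := ∫ θ in (0:ℝ)..(2 * π), |deriv f θ|
  have hsup : ⨆ θ, |f θ| ≤ S / 2 := ciSup_le fun θ => by
    linarith [(hcper.arcDerivS hhper).two_mul_abs_le_integral_abs_deriv Real.two_pi_pos
      (hf.differentiable one_ne_zero) hf' hθ₀ θ]
  have hcs : S ^ 2 ≤ (∫ θ in (0:ℝ)..(2 * π), deriv f θ ^ 2 / ‖deriv c θ‖) *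
      ∫ θ in (0:ℝ)..(2 * π), ‖deriv c θ‖ :=
    sq_integral_abs_le_integral_sq_div_mul_integral Real.two_pi_pos.le hf'
      (hc2.continuous_deriv one_le_two).norm fun θ => norm_pos_iff.mpr (hc' θ)
  simp only [arcDerivS_sq_mul_norm]
  calc (⨆ θ, |f θ|) ^ 2 ≤ (S / 2) ^ 2 :=
        pow_le_pow_left₀ (Real.iSup_nonneg fun _ => abs_nonneg _) hsup 2
    _ ≤ _ := by linarith

/-- `‖D_c h‖²_{L∞} ≤ (ℓ_c/4)·‖D_c² h‖²_{L²(ds)}`. -/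
theorem stmt1 (d : ℕ) (hd : 1 ≤ d) (c : ℝ → EuclideanSpace ℝ (Fin d))
    (hc : ClosedImmersionC2 c)
    (h : ℝ → ℝ) (hh : ContDiff ℝ 2 h) (hhper : Function.Periodic h (2 * π)) :
    (⨆ θ : ℝ, |arcDerivS c h θ|) ^ 2 ≤
      (∫ θ in (0:ℝ)..(2 * π), ‖deriv c θ‖) / 4 *
        (∫ θ in (0:ℝ)..(2 * π), (arcDerivS c (arcDerivS c h) θ) ^ 2 * ‖deriv c θ‖) :=
  stmt1_general d c hc h hh hhper
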